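/- arXiv:1003.2541 — 8 statements merged into one kernel-verified Lean document; each statement's English description precedes it below -/
import Mathlib

section
/- The evolution algebra of a bisexual population is not power-associative in general: let n = 1 and ν = 2, so that necessarily P^f_{11,1} = P^f_{12,1} = 1, and set a = P^m_{11,1} and b = P^m_{12,1}. If a ≠ 1 and a ≠ b, then for z = e^f_1 + e^m_1 one has (z²)(z²) ≠ ((z²)z)z. -/
/-!
For `n = 1`, `ν = 2` the elements `e^f_1 + c e^m_1 + (1 - c) e^m_2` form a subset closed under
multiplication, on which the product only depends on the mean `s` of the two parameters and is
given by the affine map `s ↦ a s + b (1 - s)`. Powers of `z = e^f_1 + e^m_1` thus become iterates of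
an affine map, and `(z²)(z²) = ((z²)z)z` reduces to `(a - 1)(a - b - 2) = 0`, which is excluded
since `a ≠ 1` and `a ≤ 1`, `0 ≤ b`.
-/

open Finset

/-- The bilinear multiplication of the evolution algebra of a bisexual population (EABP). -/
noncomputable def bmul {n ν : ℕ} (Pf : Fin n → Fin ν → Fin n → ℝ)
    (Pm : Fin n → Fin ν → Fin ν → ℝ)
    (z t : (Fin n → ℝ) × (Fin ν → ℝ)) : (Fin n → ℝ) × (Fin ν → ℝ) :=
  (fun p => (1 / 2) * ∑ i, ∑ j, Pf i j p * (z.1 i * t.2 j + t.1 i * z.2 j),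
   fun q => (1 / 2) * ∑ i, ∑ j, Pm i j q * (z.1 i * t.2 j + t.1 i * z.2 j))

namespace EABP

def femaleUnit (c : ℝ) : (Fin 1 → ℝ) × (Fin 2 → ℝ) := (fun _ => 1, ![c, 1 - c])

theorem femaleUnit_injective : Function.Injective femaleUnit := fun c d h => by
  simpa [femaleUnit] using congrFun (congrArg Prod.snd h) 0

def maleShare (Pm : Fin 1 → Fin 2 → Fin 2 → ℝ) (s : ℝ) : ℝ :=
  Pm 0 0 0 * s + Pm 0 1 0 * (1 - s)

theorem maleShare_injective {Pm : Fin 1 → Fin 2 → Fin 2 → ℝ} (hab : Pm 0 0 0 ≠ Pm 0 1 0) :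
    Function.Injective (maleShare Pm) := fun s t h => by
  have : (Pm 0 0 0 - Pm 0 1 0) * (s - t) = 0 := by unfold maleShare at h; linarith
  simpa [sub_eq_zero, hab] using this

theorem bmul_femaleUnit {Pf : Fin 1 → Fin 2 → Fin 1 → ℝ} {Pm : Fin 1 → Fin 2 → Fin 2 → ℝ}
    (hPf1 : ∀ i k, ∑ j, Pf i k j = 1) (hPm1 : ∀ i k, ∑ l, Pm i k l = 1) (c d : ℝ) :
    bmul Pf Pm (femaleUnit c) (femaleUnit d) = femaleUnit (maleShare Pm ((c + d) / 2)) := by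
  have hf : ∀ k, Pf 0 k 0 = 1 := fun k => by simpa using hPf1 0 k
  have hm : ∀ k, Pm 0 k 1 = 1 - Pm 0 k 0 := fun k => by
    have := hPm1 0 k; rw [Fin.sum_univ_two] at this; linarith
  ext i <;> fin_cases i <;>
    simp only [bmul, femaleUnit, maleShare, univ_unique, Fin.default_eq_zero, Fin.isValue,
      sum_singleton, Fin.sum_univ_two, Matrix.cons_val_zero, Matrix.cons_val_one,
      Matrix.cons_val_fin_one, Fin.zero_eta, Fin.mk_one, hf, hm] <;>
    ring

end EABP

open EABP in
theorem eabp_not_power_associative_general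
    (Pf : Fin 1 → Fin 2 → Fin 1 → ℝ) (Pm : Fin 1 → Fin 2 → Fin 2 → ℝ)
    (hPf1 : ∀ i k, ∑ j, Pf i k j = 1)
    (hPm0 : ∀ i k l, 0 ≤ Pm i k l) (hPm1 : ∀ i k, ∑ l, Pm i k l = 1)
    (ha : Pm 0 0 0 ≠ 1) (hab : Pm 0 0 0 ≠ Pm 0 1 0)
    (z : (Fin 1 → ℝ) × (Fin 2 → ℝ))
    (hz : z = (fun _ => 1, fun k => if k = 0 then 1 else 0)) :
    bmul Pf Pm (bmul Pf Pm z z) (bmul Pf Pm z z) ≠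
      bmul Pf Pm (bmul Pf Pm (bmul Pf Pm z z) z) z := by
  have hz_unit : z = femaleUnit 1 := by
    subst hz; ext i <;> fin_cases i <;> simp [femaleUnit]
  have ha1 : Pm 0 0 0 ≤ 1 :=
    hPm1 0 0 ▸ single_le_sum (fun l _ => hPm0 0 0 l) (mem_univ 0)
  have hb0 : 0 ≤ Pm 0 1 0 := hPm0 0 1 0
  intro h
  simp only [hz_unit, bmul_femaleUnit hPf1 hPm1] at h
  have hmean := maleShare_injective hab (femaleUnit_injective h)
  have hfactor : (Pm 0 0 0 - 1) * (Pm 0 0 0 - Pm 0 1 0 - 2) = 0 := by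
    unfold maleShare at hmean; linear_combination (-4) * hmean
  rcases mul_eq_zero.mp hfactor with h1 | h2
  · exact ha (sub_eq_zero.mp h1)
  · linarith

/-- The EABP is not power-associative in general: for `n = 1`, `ν = 2`
(so that necessarily `P^f_{11,1} = P^f_{12,1} = 1`), with `a = P^m_{11,1} ≠ 1`
and `a ≠ b = P^m_{12,1}`, the element `z = e^f_1 + e^m_1` satisfies
`(z²)(z²) ≠ ((z²)z)z`. -/
theorem eabp_not_power_associative
    (Pf : Fin 1 → Fin 2 → Fin 1 → ℝ) (Pm : Fin 1 → Fin 2 → Fin 2 → ℝ)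
    (hPf0 : ∀ i k j, 0 ≤ Pf i k j) (hPf1 : ∀ i k, ∑ j, Pf i k j = 1)
    (hPm0 : ∀ i k l, 0 ≤ Pm i k l) (hPm1 : ∀ i k, ∑ l, Pm i k l = 1)
    (ha : Pm 0 0 0 ≠ 1) (hab : Pm 0 0 0 ≠ Pm 0 1 0)
    (z : (Fin 1 → ℝ) × (Fin 2 → ℝ))
    (hz : z = (fun _ => 1, fun k => if k = 0 then 1 else 0)) :
    bmul Pf Pm (bmul Pf Pm z z) (bmul Pf Pm z z) ≠
      bmul Pf Pm (bmul Pf Pm (bmul Pf Pm z z) z) z :=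
  eabp_not_power_associative_general Pf Pm hPf1 hPm0 hPm1 ha hab z hz
end

section
/- The evolution algebra of a bisexual population has no nonzero character: if σ : ℬ → ℝ is a linear map satisfying σ(zt) = σ(z)σ(t) for all z, t ∈ ℬ, then σ = 0. -/
/-!
Products of two female (or two male) vectors vanish in the EABP, so every such vector squares
to zero, and a multiplicative linear form kills any element of square zero. Since ℬ is the sum
of its female and male subspaces, the form is zero.
-/

open Finset

theorem LinearMap.apply_eq_zero_of_mul_self_eq_zero {R M : Type*} [CommSemiring R]
    [NoZeroDivisors R] [AddCommMonoid M] [Module R M] (σ : M →ₗ[R] R) (mul : M → M → M)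
    (hσ : ∀ z t, σ (mul z t) = σ z * σ t) {z : M} (hz : mul z z = 0) : σ z = 0 :=
  mul_self_eq_zero.mp (by rw [← hσ, hz, map_zero])

section bmul

variable {n ν : ℕ} (Pf : Fin n → Fin ν → Fin n → ℝ) (Pm : Fin n → Fin ν → Fin ν → ℝ)

theorem bmul_inl_inl (x x' : Fin n → ℝ) :
    bmul Pf Pm (LinearMap.inl ℝ _ (Fin ν → ℝ) x) (LinearMap.inl ℝ _ _ x') = 0 := by
  simp [bmul, Prod.ext_iff, funext_iff]

theorem bmul_inr_inr (y y' : Fin ν → ℝ) :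
    bmul Pf Pm (LinearMap.inr ℝ (Fin n → ℝ) _ y) (LinearMap.inr ℝ _ _ y') = 0 := by
  simp [bmul, Prod.ext_iff, funext_iff]

end bmul

theorem eabp_no_character_general {n ν : ℕ}
    (Pf : Fin n → Fin ν → Fin n → ℝ) (Pm : Fin n → Fin ν → Fin ν → ℝ)
    (σ : ((Fin n → ℝ) × (Fin ν → ℝ)) →ₗ[ℝ] ℝ)
    (hσ : ∀ z t, σ (bmul Pf Pm z t) = σ z * σ t) :
    σ = 0 := by
  refine LinearMap.prod_ext (LinearMap.ext fun x => ?_) (LinearMap.ext fun y => ?_)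
  · exact σ.apply_eq_zero_of_mul_self_eq_zero _ hσ (bmul_inl_inl Pf Pm x x)
  · exact σ.apply_eq_zero_of_mul_self_eq_zero _ hσ (bmul_inr_inr Pf Pm y y)

/-- The EABP has no nonzero character: every multiplicative linear form on it is zero. -/
theorem eabp_no_character {n ν : ℕ} [NeZero n] [NeZero ν]
    (Pf : Fin n → Fin ν → Fin n → ℝ) (Pm : Fin n → Fin ν → Fin ν → ℝ)
    (hPf0 : ∀ i k j, 0 ≤ Pf i k j) (hPf1 : ∀ i k, ∑ j, Pf i k j = 1)
    (hPm0 : ∀ i k l, 0 ≤ Pm i k l) (hPm1 : ∀ i k, ∑ l, Pm i k l = 1)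
    (σ : ((Fin n → ℝ) × (Fin ν → ℝ)) →ₗ[ℝ] ℝ)
    (hσ : ∀ z t, σ (bmul Pf Pm z t) = σ z * σ t) :
    σ = 0 :=
  eabp_no_character_general Pf Pm σ hσ
end

section
/- The evolution algebra of a bisexual population is dibaric: the linear map φ : ℬ → 𝔄 determined by φ(e^f_i) = w for i = 1,…,n and φ(e^m_k) = m for k = 1,…,ν is a surjective algebra homomorphism, i.e. φ(zt) = φ(z)φ(t) for all z, t ∈ ℬ and φ is onto 𝔄. -/
open Finset

/-- The multiplication of the sex differentiation algebra `𝔄 = ⟨w, m⟩` with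
`w² = m² = 0`, `wm = mw = (1/2)(w + m)`; an element `α w + β m` is represented by
the pair `(α, β) ∈ ℝ × ℝ`. -/
noncomputable def amul (p q : ℝ × ℝ) : ℝ × ℝ :=
  ((1 / 2) * (p.1 * q.2 + p.2 * q.1), (1 / 2) * (p.1 * q.2 + p.2 * q.1))

/-- The map `φ : ℬ → 𝔄` with `φ(e^f_i) = w`, `φ(e^m_k) = m`, i.e.
`φ(x, y) = X(x)·w + Y(y)·m`. -/
noncomputable def phi {n ν : ℕ} (z : (Fin n → ℝ) × (Fin ν → ℝ)) : ℝ × ℝ :=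
  (∑ i, z.1 i, ∑ j, z.2 j)

/-! Each coefficient vector `Pf i k ·`, `Pm i k ·` sums to `1`, so summing the coordinates
of a product `z t` in either sex forgets the coefficients and leaves the symmetric
bilinear form `½ (X(z) Y(t) + Y(z) X(t))`, where `X` and `Y` sum the female and male
coordinates. This is exactly the product of `φ z` and `φ t` in `𝔄`. -/

section StochasticSum

variable {R ι κ μ : Type*} [CommSemiring R] [Fintype ι] [Fintype κ] [Fintype μ]

theorem sum_sum_sum_mul_of_sum_eq_one (P : ι → κ → μ → R) (hP : ∀ i k, ∑ p, P i k p = 1)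
    (a : ι → κ → R) : ∑ p, ∑ i, ∑ k, P i k p * a i k = ∑ i, ∑ k, a i k := by
  rw [sum_comm]
  refine sum_congr rfl fun i _ => ?_
  rw [sum_comm]
  simp only [← sum_mul, hP, one_mul]

theorem sum_mul_sum_sum_mul_add_mul_of_sum_eq_one (P : ι → κ → μ → R)
    (hP : ∀ i k, ∑ p, P i k p = 1) (c : R) (x x' : ι → R) (y y' : κ → R) :
    ∑ p, c * ∑ i, ∑ k, P i k p * (x i * y k + x' i * y' k) =
      c * ((∑ i, x i) * (∑ k, y k) + (∑ k, y' k) * (∑ i, x' i)) := by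
  rw [← mul_sum, sum_sum_sum_mul_of_sum_eq_one P hP, sum_mul_sum, sum_mul_sum, mul_comm,
    sum_comm (f := fun k i => y' k * x' i)]
  simp only [sum_add_distrib, mul_comm (y' _)]
  ring

end StochasticSum

theorem phi_bmul {n ν : ℕ} {Pf : Fin n → Fin ν → Fin n → ℝ} {Pm : Fin n → Fin ν → Fin ν → ℝ}
    (hPf1 : ∀ i k, ∑ j, Pf i k j = 1) (hPm1 : ∀ i k, ∑ l, Pm i k l = 1)
    (z t : (Fin n → ℝ) × (Fin ν → ℝ)) :
    phi (bmul Pf Pm z t) = amul (phi z) (phi t) :=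
  Prod.ext (sum_mul_sum_sum_mul_add_mul_of_sum_eq_one Pf hPf1 _ _ _ _ _)
    (sum_mul_sum_sum_mul_add_mul_of_sum_eq_one Pm hPm1 _ _ _ _ _)

theorem phi_surjective {n ν : ℕ} [NeZero n] [NeZero ν] :
    Function.Surjective (phi (n := n) (ν := ν)) :=
  fun p => ⟨(Pi.single 0 p.1, Pi.single 0 p.2), by simp [phi]⟩

theorem eabp_dibaric_general {n ν : ℕ} [NeZero n] [NeZero ν]
    (Pf : Fin n → Fin ν → Fin n → ℝ) (Pm : Fin n → Fin ν → Fin ν → ℝ)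
    (hPf1 : ∀ i k, ∑ j, Pf i k j = 1)
    (hPm1 : ∀ i k, ∑ l, Pm i k l = 1) :
    (∀ z t : (Fin n → ℝ) × (Fin ν → ℝ),
      phi (bmul Pf Pm z t) = amul (phi z) (phi t)) ∧
    Function.Surjective (phi (n := n) (ν := ν)) :=
  ⟨phi_bmul hPf1 hPm1, phi_surjective⟩

/-- The EABP is dibaric: `φ` is a surjective algebra homomorphism onto the sex
differentiation algebra `𝔄`. -/
theorem eabp_dibaric {n ν : ℕ} [NeZero n] [NeZero ν]
    (Pf : Fin n → Fin ν → Fin n → ℝ) (Pm : Fin n → Fin ν → Fin ν → ℝ)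
    (hPf0 : ∀ i k j, 0 ≤ Pf i k j) (hPf1 : ∀ i k, ∑ j, Pf i k j = 1)
    (hPm0 : ∀ i k l, 0 ≤ Pm i k l) (hPm1 : ∀ i k, ∑ l, Pm i k l = 1) :
    (∀ z t : (Fin n → ℝ) × (Fin ν → ℝ),
      phi (bmul Pf Pm z t) = amul (phi z) (phi t)) ∧
    Function.Surjective (phi (n := n) (ν := ν)) :=
  eabp_dibaric_general Pf Pm hPf1 hPm1
end

section
/- The evolution algebra of a bisexual population is a (non-associative) Banach algebra: for all z, t ∈ ℬ one has ‖zt‖ ≤ ‖z‖·‖t‖, where ‖·‖ is the ℓ¹ norm on ℝ^{n+ν}. -/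
open Finset

/-- The ℓ¹ norm on the EABP: `‖(x,y)‖ = Σᵢ |xᵢ| + Σⱼ |yⱼ|`. -/
noncomputable def bnorm {n ν : ℕ} (z : (Fin n → ℝ) × (Fin ν → ℝ)) : ℝ :=
  ∑ i, |z.1 i| + ∑ j, |z.2 j|

/-!
Writing `A i k = xᵢ y'ₖ + x'ᵢ yₖ` for `z = (x, y)`, `t = (x', y')`, both components of `zt`
are half the image of `A` under a stochastic matrix, which does not increase the ℓ¹ norm.
Hence `‖zt‖ ≤ Σ |A i k| ≤ ‖x‖‖y'‖ + ‖x'‖‖y‖ ≤ ‖z‖‖t‖`.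
-/

theorem sum_abs_sum_mul_le_of_stochastic {α β : Type*} [Fintype α] [Fintype β]
    (P : α → β → ℝ) (hP0 : ∀ a b, 0 ≤ P a b) (hP1 : ∀ a, ∑ b, P a b = 1) (A : α → ℝ) :
    ∑ b, |∑ a, P a b * A a| ≤ ∑ a, |A a| :=
  calc ∑ b, |∑ a, P a b * A a|
      ≤ ∑ b, ∑ a, P a b * |A a| := by
        gcongr with b
        refine (abs_sum_le_sum_abs _ _).trans_eq (sum_congr rfl fun a _ => ?_)
        rw [abs_mul, abs_of_nonneg (hP0 a b)]
    _ = ∑ a, |A a| := by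
        rw [sum_comm]
        simp only [← sum_mul, hP1, one_mul]

theorem sum_abs_half_sum_sum_mul_le {ι κ β : Type*} [Fintype ι] [Fintype κ] [Fintype β]
    (P : ι → κ → β → ℝ) (hP0 : ∀ i k b, 0 ≤ P i k b) (hP1 : ∀ i k, ∑ b, P i k b = 1)
    (A : ι → κ → ℝ) :
    ∑ b, |(1 / 2 : ℝ) * ∑ i, ∑ k, P i k b * A i k| ≤ (1 / 2) * ∑ i, ∑ k, |A i k| := by
  simp only [abs_mul, abs_of_pos (one_half_pos : (0 : ℝ) < 1 / 2), ← mul_sum,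
    ← Fintype.sum_prod_type']
  gcongr
  exact sum_abs_sum_mul_le_of_stochastic (fun a : ι × κ => P a.1 a.2) (fun a => hP0 a.1 a.2)
    (fun a => hP1 a.1 a.2) (fun a => A a.1 a.2)

theorem sum_sum_abs_cross_le {n ν : ℕ} (z t : (Fin n → ℝ) × (Fin ν → ℝ)) :
    ∑ i, ∑ k, |z.1 i * t.2 k + t.1 i * z.2 k|
      ≤ (∑ i, |z.1 i|) * ∑ k, |t.2 k| + (∑ i, |t.1 i|) * ∑ k, |z.2 k| :=
  calc ∑ i, ∑ k, |z.1 i * t.2 k + t.1 i * z.2 k|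
      ≤ ∑ i, ∑ k, (|z.1 i| * |t.2 k| + |t.1 i| * |z.2 k|) := by
        gcongr with i _ k _
        exact (abs_add_le _ _).trans_eq (by rw [abs_mul, abs_mul])
    _ = (∑ i, |z.1 i|) * ∑ k, |t.2 k| + (∑ i, |t.1 i|) * ∑ k, |z.2 k| := by
        simp only [sum_mul_sum, ← sum_add_distrib]

theorem bnorm_bmul_le_sum_sum_abs_cross {n ν : ℕ}
    (Pf : Fin n → Fin ν → Fin n → ℝ) (Pm : Fin n → Fin ν → Fin ν → ℝ)
    (hPf0 : ∀ i k j, 0 ≤ Pf i k j) (hPf1 : ∀ i k, ∑ j, Pf i k j = 1)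
    (hPm0 : ∀ i k l, 0 ≤ Pm i k l) (hPm1 : ∀ i k, ∑ l, Pm i k l = 1)
    (z t : (Fin n → ℝ) × (Fin ν → ℝ)) :
    bnorm (bmul Pf Pm z t) ≤ ∑ i, ∑ k, |z.1 i * t.2 k + t.1 i * z.2 k| := by
  have hf := sum_abs_half_sum_sum_mul_le Pf hPf0 hPf1 fun i k => z.1 i * t.2 k + t.1 i * z.2 k
  have hm := sum_abs_half_sum_sum_mul_le Pm hPm0 hPm1 fun i k => z.1 i * t.2 k + t.1 i * z.2 k
  rw [bnorm, bmul]
  linarith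

theorem eabp_banach_algebra_general {n ν : ℕ}
    (Pf : Fin n → Fin ν → Fin n → ℝ) (Pm : Fin n → Fin ν → Fin ν → ℝ)
    (hPf0 : ∀ i k j, 0 ≤ Pf i k j) (hPf1 : ∀ i k, ∑ j, Pf i k j = 1)
    (hPm0 : ∀ i k l, 0 ≤ Pm i k l) (hPm1 : ∀ i k, ∑ l, Pm i k l = 1)
    (z t : (Fin n → ℝ) × (Fin ν → ℝ)) :
    bnorm (bmul Pf Pm z t) ≤ bnorm z * bnorm t := by
  refine (bnorm_bmul_le_sum_sum_abs_cross Pf Pm hPf0 hPf1 hPm0 hPm1 z t).trans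
    ((sum_sum_abs_cross_le z t).trans ?_)
  have hz₁ : 0 ≤ ∑ i, |z.1 i| := sum_nonneg fun _ _ => abs_nonneg _
  have hz₂ : 0 ≤ ∑ k, |z.2 k| := sum_nonneg fun _ _ => abs_nonneg _
  have ht₁ : 0 ≤ ∑ i, |t.1 i| := sum_nonneg fun _ _ => abs_nonneg _
  have ht₂ : 0 ≤ ∑ k, |t.2 k| := sum_nonneg fun _ _ => abs_nonneg _
  rw [bnorm, bnorm]
  nlinarith [mul_nonneg hz₁ ht₁, mul_nonneg hz₂ ht₂]

/-- The EABP is a (non-associative) Banach algebra: the ℓ¹ norm is submultiplicative. -/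
theorem eabp_banach_algebra {n ν : ℕ} [NeZero n] [NeZero ν]
    (Pf : Fin n → Fin ν → Fin n → ℝ) (Pm : Fin n → Fin ν → Fin ν → ℝ)
    (hPf0 : ∀ i k j, 0 ≤ Pf i k j) (hPf1 : ∀ i k, ∑ j, Pf i k j = 1)
    (hPm0 : ∀ i k l, 0 ≤ Pm i k l) (hPm1 : ∀ i k, ∑ l, Pm i k l = 1)
    (z t : (Fin n → ℝ) × (Fin ν → ℝ)) :
    bnorm (bmul Pf Pm z t) ≤ bnorm z * bnorm t :=
  eabp_banach_algebra_general Pf Pm hPf0 hPf1 hPm0 hPm1 z t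
end

section
/- A linear map D : ℬ → ℬ with D(e^f_k) = Σ_{i=1}^n d^{ff}_{ki} e^f_i + Σ_{l=1}^ν d^{fm}_{kl} e^m_l (k = 1,…,n) and D(e^m_k) = Σ_{i=1}^n d^{mf}_{ki} e^f_i + Σ_{l=1}^ν d^{mm}_{kl} e^m_l (k = 1,…,ν) is a derivation of ℬ (i.e. D(zt) = D(z)t + zD(t) for all z, t ∈ ℬ) if and only if its matrix entries satisfy: (9) Σ_{l=1}^ν (d^{fm}_{kl} P^f_{jl,i} + d^{fm}_{jl} P^f_{kl,i}) = 0 for all i,j,k ∈ {1,…,n}, and Σ_{l=1}^ν (d^{fm}_{kl} P^m_{jl,q} + d^{fm}_{jl} P^m_{kl,q}) = 0 for all j,k ∈ {1,…,n}, q ∈ {1,…,ν}; (10) Σ_{i=1}^n (d^{mf}_{ki} P^f_{ij,s} + d^{mf}_{ji} P^f_{ik,s}) = 0 for all s ∈ {1,…,n}, j,k ∈ {1,…,ν}, and Σ_{i=1}^n (d^{mf}_{ki} P^m_{ij,q} + d^{mf}_{ji} P^m_{ik,q}) = 0 for all j,k,q ∈ {1,…,ν}; (11) Σ_{p=1}^n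 (d^{ff}_{ip} P^f_{pj,s} − d^{ff}_{ps} P^f_{ij,p}) + Σ_{q=1}^ν (d^{mm}_{jq} P^f_{iq,s} − d^{mf}_{qs} P^m_{ij,q}) = 0 for all i,s ∈ {1,…,n}, j ∈ {1,…,ν}, and Σ_{p=1}^n (d^{ff}_{ip} P^m_{pj,t} − d^{fm}_{pt} P^f_{ij,p}) + Σ_{q=1}^ν (d^{mm}_{jq} P^m_{iq,t} − d^{mm}_{qt} P^m_{ij,q}) = 0 for all i ∈ {1,…,n}, j,t ∈ {1,…,ν}. -/
/-!
Both sides of the Leibniz rule `D (z t) = D z · t + z · D t` are bilinear in `(z, t)`, so it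
holds everywhere iff it holds on pairs of basis vectors, and by commutativity of the
multiplication the pairs `(e^m_k, e^f_i)` reduce to `(e^f_i, e^m_k)`. Since `e^f_k e^f_j = 0` and
`e^m_k e^m_j = 0`, the pairs of female and of male basis vectors only see the off-diagonal blocks
`dfm` and `dmf` of `D` and give (9) and (10); the mixed pairs give (11).
-/

open Finset

/-- The female basis element `e^f_i`. -/
noncomputable def eF {n ν : ℕ} (i : Fin n) : (Fin n → ℝ) × (Fin ν → ℝ) :=
  (fun p => if p = i then 1 else 0, 0)

/-- The male basis element `e^m_k`. -/
noncomputable def eM {n ν : ℕ} (k : Fin ν) : (Fin n → ℝ) × (Fin ν → ℝ) :=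
  (0, fun q => if q = k then 1 else 0)

open Module

theorem LinearMap.leibniz_iff_forall_basis {ι R M : Type*} [CommSemiring R] [AddCommMonoid M]
    [Module R M] (b : Basis ι R M) (B : M →ₗ[R] M →ₗ[R] M) (D : M →ₗ[R] M) :
    (∀ z t, D (B z t) = B (D z) t + B z (D t)) ↔
      ∀ i j, D (B (b i) (b j)) = B (D (b i)) (b j) + B (b i) (D (b j)) := by
  refine ⟨fun h i j => h _ _, fun h z t => ?_⟩
  have key : B.compr₂ D = B ∘ₗ D + B.compl₂ D :=
    LinearMap.ext_basis b b fun i j => by simpa using h i j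
  simpa using congr($key z t)

theorem leibniz_comm_iff {M : Type*} [AddCommMagma M] {B : M → M → M} {D : M → M}
    (hB : ∀ z t, B z t = B t z) {z t : M} :
    D (B z t) = B (D z) t + B z (D t) ↔ D (B t z) = B (D t) z + B t (D z) := by
  rw [hB z t, hB (D z) t, hB z (D t), add_comm]

section EABP

variable {n ν : ℕ} (Pf : Fin n → Fin ν → Fin n → ℝ) (Pm : Fin n → Fin ν → Fin ν → ℝ)

local notation "𝔅" => (Fin n → ℝ) × (Fin ν → ℝ)

theorem bmul_comm (z t : 𝔅) : bmul Pf Pm z t = bmul Pf Pm t z := by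
  ext p <;> simp only [bmul] <;> congr 1 <;>
    refine sum_congr rfl fun _ _ => sum_congr rfl fun _ _ => by ring

theorem bmul_add_left (x y t : 𝔅) : bmul Pf Pm (x + y) t = bmul Pf Pm x t + bmul Pf Pm y t := by
  ext p <;>
    simp only [bmul, Prod.fst_add, Prod.snd_add, Pi.add_apply, ← mul_add, ← sum_add_distrib] <;>
    congr 1 <;> refine sum_congr rfl fun _ _ => sum_congr rfl fun _ _ => by ring

theorem bmul_smul_left (c : ℝ) (x t : 𝔅) : bmul Pf Pm (c • x) t = c • bmul Pf Pm x t := by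
  ext p <;> simp only [bmul, Prod.smul_fst, Prod.smul_snd, Pi.smul_apply, smul_eq_mul, mul_sum] <;>
    refine sum_congr rfl fun _ _ => sum_congr rfl fun _ _ => by ring

noncomputable def bmulₗ : 𝔅 →ₗ[ℝ] 𝔅 →ₗ[ℝ] 𝔅 :=
  LinearMap.mk₂ ℝ (bmul Pf Pm) (bmul_add_left Pf Pm) (bmul_smul_left Pf Pm)
    (fun z x y => by simp only [bmul_comm Pf Pm z, bmul_add_left])
    (fun c z x => by simp only [bmul_comm Pf Pm z, bmul_smul_left])

theorem bmulₗ_apply (z t : 𝔅) : bmulₗ Pf Pm z t = bmul Pf Pm z t := rfl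

noncomputable def eabpBasis : Basis (Fin n ⊕ Fin ν) ℝ 𝔅 :=
  (Pi.basisFun ℝ (Fin n)).prod (Pi.basisFun ℝ (Fin ν))

theorem eabpBasis_inl (i : Fin n) : eabpBasis (Sum.inl i) = (eF i : 𝔅) := by
  ext p <;> simp [eabpBasis, eF, Pi.single_apply]

theorem eabpBasis_inr (k : Fin ν) : eabpBasis (Sum.inr k) = (eM k : 𝔅) := by
  ext q <;> simp [eabpBasis, eM, Pi.single_apply]

theorem sum_smul_eF_add_sum_smul_eM (z : 𝔅) :
    ∑ i, z.1 i • eF i + ∑ k, z.2 k • eM k = z := by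
  ext p <;> simp [eF, eM, Prod.fst_sum, Prod.snd_sum]

theorem bmul_eF_right (x : 𝔅) (j : Fin n) :
    bmul Pf Pm x (eF j) =
      (1 / 2 : ℝ) • (fun s => ∑ l, x.2 l * Pf j l s, fun q => ∑ l, x.2 l * Pm j l q) := by
  ext s <;> simp only [bmul, eF, Prod.smul_fst, Prod.smul_snd, Pi.smul_apply, smul_eq_mul] <;>
    congr 1 <;> rw [sum_comm] <;> refine sum_congr rfl fun l _ => ?_ <;>
    rw [sum_eq_single j] <;> simp +contextual [mul_comm]

theorem bmul_eM_right (x : 𝔅) (k : Fin ν) :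
    bmul Pf Pm x (eM k) =
      (1 / 2 : ℝ) • (fun s => ∑ i, x.1 i * Pf i k s, fun q => ∑ i, x.1 i * Pm i k q) := by
  ext s <;> simp only [bmul, eM, Prod.smul_fst, Prod.smul_snd, Pi.smul_apply, smul_eq_mul] <;>
    congr 1 <;> refine sum_congr rfl fun i _ => ?_ <;>
    rw [sum_eq_single k] <;> simp +contextual [mul_comm]

theorem bmul_eF_eM (i : Fin n) (k : Fin ν) :
    bmul Pf Pm (eF i) (eM k) = (1 / 2 : ℝ) • (Pf i k, Pm i k) := by
  rw [bmul_eM_right]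
  congr 1
  ext s <;> simp [eF]

theorem bmul_eF_eF (k j : Fin n) : bmul Pf Pm (eF k) (eF j) = (0 : 𝔅) := by
  rw [bmul_eF_right]
  ext <;> simp [eF]

theorem bmul_eM_eM (k j : Fin ν) : bmul Pf Pm (eM k) (eM j) = (0 : 𝔅) := by
  rw [bmul_eM_right]
  ext <;> simp [eM]

variable (D : ((Fin n → ℝ) × (Fin ν → ℝ)) →ₗ[ℝ] ((Fin n → ℝ) × (Fin ν → ℝ)))
    (dff : Fin n → Fin n → ℝ) (dfm : Fin n → Fin ν → ℝ)
    (dmf : Fin ν → Fin n → ℝ) (dmm : Fin ν → Fin ν → ℝ)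

theorem apply_eq_of_apply_eF_eM
    (hDf : ∀ k : Fin n, D (eF k) = (fun i => dff k i, fun l => dfm k l))
    (hDm : ∀ k : Fin ν, D (eM k) = (fun i => dmf k i, fun l => dmm k l)) (v : 𝔅) :
    D v = (fun s => (∑ p, dff p s * v.1 p) + ∑ q, dmf q s * v.2 q,
      fun t => (∑ p, dfm p t * v.1 p) + ∑ q, dmm q t * v.2 q) := by
  conv_lhs => rw [← sum_smul_eF_add_sum_smul_eM v]
  simp only [map_add, map_sum, map_smul, hDf, hDm]
  ext s <;> simp [Prod.fst_sum, Prod.snd_sum, mul_comm]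

theorem leibniz_eF_eF_iff (hDf : ∀ k : Fin n, D (eF k) = (fun i => dff k i, fun l => dfm k l))
    (k j : Fin n) :
    D (bmul Pf Pm (eF k) (eF j)) = bmul Pf Pm (D (eF k)) (eF j) + bmul Pf Pm (eF k) (D (eF j)) ↔
      (∀ i, ∑ l, (dfm k l * Pf j l i + dfm j l * Pf k l i) = 0) ∧
        ∀ q, ∑ l, (dfm k l * Pm j l q + dfm j l * Pm k l q) = 0 := by
  rw [bmul_eF_eF, map_zero, bmul_comm Pf Pm (eF k) (D _), bmul_eF_right, bmul_eF_right, hDf, hDf,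
    ← smul_add, eq_comm, smul_eq_zero_iff_right (by norm_num)]
  simp only [Prod.ext_iff, funext_iff, Prod.fst_add, Prod.snd_add, Pi.add_apply, Prod.fst_zero,
    Prod.snd_zero, Pi.zero_apply, sum_add_distrib]

theorem leibniz_eM_eM_iff (hDm : ∀ k : Fin ν, D (eM k) = (fun i => dmf k i, fun l => dmm k l))
    (k j : Fin ν) :
    D (bmul Pf Pm (eM k) (eM j)) = bmul Pf Pm (D (eM k)) (eM j) + bmul Pf Pm (eM k) (D (eM j)) ↔
      (∀ s, ∑ i, (dmf k i * Pf i j s + dmf j i * Pf i k s) = 0) ∧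
        ∀ q, ∑ i, (dmf k i * Pm i j q + dmf j i * Pm i k q) = 0 := by
  rw [bmul_eM_eM, map_zero, bmul_comm Pf Pm (eM k) (D _), bmul_eM_right, bmul_eM_right, hDm, hDm,
    ← smul_add, eq_comm, smul_eq_zero_iff_right (by norm_num)]
  simp only [Prod.ext_iff, funext_iff, Prod.fst_add, Prod.snd_add, Pi.add_apply, Prod.fst_zero,
    Prod.snd_zero, Pi.zero_apply, sum_add_distrib]

theorem leibniz_eF_eM_iff (hDf : ∀ k : Fin n, D (eF k) = (fun i => dff k i, fun l => dfm k l))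
    (hDm : ∀ k : Fin ν, D (eM k) = (fun i => dmf k i, fun l => dmm k l))
    (i : Fin n) (j : Fin ν) :
    D (bmul Pf Pm (eF i) (eM j)) = bmul Pf Pm (D (eF i)) (eM j) + bmul Pf Pm (eF i) (D (eM j)) ↔
      (∀ s, ∑ p, (dff i p * Pf p j s - dff p s * Pf i j p) +
          ∑ q, (dmm j q * Pf i q s - dmf q s * Pm i j q) = 0) ∧
        ∀ t, ∑ p, (dff i p * Pm p j t - dfm p t * Pf i j p) +
          ∑ q, (dmm j q * Pm i q t - dmm q t * Pm i j q) = 0 := by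
  rw [bmul_eF_eM, map_smul, bmul_comm Pf Pm (eF i) (D _), bmul_eM_right, bmul_eF_right, hDf, hDm,
    ← smul_add, smul_right_inj (by norm_num), apply_eq_of_apply_eF_eM D dff dfm dmf dmm hDf hDm,
    Prod.ext_iff, funext_iff, funext_iff]
  refine and_congr (forall_congr' fun s => ?_) (forall_congr' fun t => ?_) <;>
    rw [eq_comm, ← sub_eq_zero] <;> convert Iff.rfl using 2 <;>
    simp only [Prod.fst_add, Prod.snd_add, Pi.add_apply, sum_sub_distrib] <;> ring

theorem forall_leibniz_eF_eF_iff
    (hDf : ∀ k : Fin n, D (eF k) = (fun i => dff k i, fun l => dfm k l)) :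
    (∀ k j : Fin n, D (bmul Pf Pm (eF k) (eF j)) =
        bmul Pf Pm (D (eF k)) (eF j) + bmul Pf Pm (eF k) (D (eF j))) ↔
      (∀ i j k : Fin n, ∑ l, (dfm k l * Pf j l i + dfm j l * Pf k l i) = 0) ∧
        ∀ (j k : Fin n) (q : Fin ν), ∑ l, (dfm k l * Pm j l q + dfm j l * Pm k l q) = 0 := by
  simp only [leibniz_eF_eF_iff Pf Pm D dff dfm hDf, forall_and]
  exact and_congr ⟨fun h i j k => h k j i, fun h k j i => h i j k⟩
    ⟨fun h j k q => h k j q, fun h k j q => h j k q⟩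

theorem forall_leibniz_eM_eM_iff
    (hDm : ∀ k : Fin ν, D (eM k) = (fun i => dmf k i, fun l => dmm k l)) :
    (∀ k j : Fin ν, D (bmul Pf Pm (eM k) (eM j)) =
        bmul Pf Pm (D (eM k)) (eM j) + bmul Pf Pm (eM k) (D (eM j))) ↔
      (∀ (s : Fin n) (j k : Fin ν), ∑ i, (dmf k i * Pf i j s + dmf j i * Pf i k s) = 0) ∧
        ∀ j k q : Fin ν, ∑ i, (dmf k i * Pm i j q + dmf j i * Pm i k q) = 0 := by
  simp only [leibniz_eM_eM_iff Pf Pm D dmf dmm hDm, forall_and]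
  exact and_congr ⟨fun h s j k => h k j s, fun h k j s => h s j k⟩
    ⟨fun h j k q => h k j q, fun h k j q => h j k q⟩

theorem forall_leibniz_eF_eM_iff
    (hDf : ∀ k : Fin n, D (eF k) = (fun i => dff k i, fun l => dfm k l))
    (hDm : ∀ k : Fin ν, D (eM k) = (fun i => dmf k i, fun l => dmm k l)) :
    (∀ (i : Fin n) (j : Fin ν), D (bmul Pf Pm (eF i) (eM j)) =
        bmul Pf Pm (D (eF i)) (eM j) + bmul Pf Pm (eF i) (D (eM j))) ↔
      (∀ (i s : Fin n) (j : Fin ν), ∑ p, (dff i p * Pf p j s - dff p s * Pf i j p) +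
          ∑ q, (dmm j q * Pf i q s - dmf q s * Pm i j q) = 0) ∧
        ∀ (i : Fin n) (j t : Fin ν), ∑ p, (dff i p * Pm p j t - dfm p t * Pf i j p) +
          ∑ q, (dmm j q * Pm i q t - dmm q t * Pm i j q) = 0 := by
  simp only [leibniz_eF_eM_iff Pf Pm D dff dfm dmf dmm hDf hDm, forall_and]
  exact and_congr ⟨fun h i s j => h i j s, fun h i j s => h i s j⟩ Iff.rfl

theorem forall_leibniz_eM_eF_iff :
    (∀ (k : Fin ν) (i : Fin n), D (bmul Pf Pm (eM k) (eF i)) =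
        bmul Pf Pm (D (eM k)) (eF i) + bmul Pf Pm (eM k) (D (eF i))) ↔
      ∀ (i : Fin n) (k : Fin ν), D (bmul Pf Pm (eF i) (eM k)) =
        bmul Pf Pm (D (eF i)) (eM k) + bmul Pf Pm (eF i) (D (eM k)) :=
  forall_comm.trans (forall₂_congr fun _ _ => leibniz_comm_iff (bmul_comm Pf Pm))

end EABP

theorem eabp_derivations_general {n ν : ℕ}
    (Pf : Fin n → Fin ν → Fin n → ℝ) (Pm : Fin n → Fin ν → Fin ν → ℝ)
    (D : ((Fin n → ℝ) × (Fin ν → ℝ)) →ₗ[ℝ] ((Fin n → ℝ) × (Fin ν → ℝ)))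
    (dff : Fin n → Fin n → ℝ) (dfm : Fin n → Fin ν → ℝ)
    (dmf : Fin ν → Fin n → ℝ) (dmm : Fin ν → Fin ν → ℝ)
    (hDf : ∀ k : Fin n, D (eF k) = (fun i => dff k i, fun l => dfm k l))
    (hDm : ∀ k : Fin ν, D (eM k) = (fun i => dmf k i, fun l => dmm k l)) :
    (∀ z t, D (bmul Pf Pm z t) = bmul Pf Pm (D z) t + bmul Pf Pm z (D t)) ↔
    ((∀ (i j k : Fin n), ∑ l, (dfm k l * Pf j l i + dfm j l * Pf k l i) = 0) ∧
     (∀ (j k : Fin n) (q : Fin ν), ∑ l, (dfm k l * Pm j l q + dfm j l * Pm k l q) = 0) ∧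
     (∀ (s : Fin n) (j k : Fin ν), ∑ i, (dmf k i * Pf i j s + dmf j i * Pf i k s) = 0) ∧
     (∀ (j k q : Fin ν), ∑ i, (dmf k i * Pm i j q + dmf j i * Pm i k q) = 0) ∧
     (∀ (i s : Fin n) (j : Fin ν),
        ∑ p, (dff i p * Pf p j s - dff p s * Pf i j p) +
          ∑ q, (dmm j q * Pf i q s - dmf q s * Pm i j q) = 0) ∧
     (∀ (i : Fin n) (j t : Fin ν),
        ∑ p, (dff i p * Pm p j t - dfm p t * Pf i j p) +
          ∑ q, (dmm j q * Pm i q t - dmm q t * Pm i j q) = 0)) := by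
  refine (LinearMap.leibniz_iff_forall_basis eabpBasis (bmulₗ Pf Pm) D).trans ?_
  simp only [bmulₗ_apply, Sum.forall, eabpBasis_inl, eabpBasis_inr, forall_and]
  rw [forall_leibniz_eM_eF_iff, forall_leibniz_eF_eF_iff Pf Pm D dff dfm hDf,
    forall_leibniz_eF_eM_iff Pf Pm D dff dfm dmf dmm hDf hDm,
    forall_leibniz_eM_eM_iff Pf Pm D dmf dmm hDm]
  tauto

/-- A linear map `D` with matrix entries `dff, dfm, dmf, dmm` in the natural basis is a
derivation of the EABP if and only if the entries satisfy the relations (9), (10), (11). -/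
theorem eabp_derivations {n ν : ℕ} [NeZero n] [NeZero ν]
    (Pf : Fin n → Fin ν → Fin n → ℝ) (Pm : Fin n → Fin ν → Fin ν → ℝ)
    (hPf0 : ∀ i k j, 0 ≤ Pf i k j) (hPf1 : ∀ i k, ∑ j, Pf i k j = 1)
    (hPm0 : ∀ i k l, 0 ≤ Pm i k l) (hPm1 : ∀ i k, ∑ l, Pm i k l = 1)
    (D : ((Fin n → ℝ) × (Fin ν → ℝ)) →ₗ[ℝ] ((Fin n → ℝ) × (Fin ν → ℝ)))
    (dff : Fin n → Fin n → ℝ) (dfm : Fin n → Fin ν → ℝ)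
    (dmf : Fin ν → Fin n → ℝ) (dmm : Fin ν → Fin ν → ℝ)
    (hDf : ∀ k : Fin n, D (eF k) = (fun i => dff k i, fun l => dfm k l))
    (hDm : ∀ k : Fin ν, D (eM k) = (fun i => dmf k i, fun l => dmm k l)) :
    (∀ z t, D (bmul Pf Pm z t) = bmul Pf Pm (D z) t + bmul Pf Pm z (D t)) ↔
    ((∀ (i j k : Fin n), ∑ l, (dfm k l * Pf j l i + dfm j l * Pf k l i) = 0) ∧
     (∀ (j k : Fin n) (q : Fin ν), ∑ l, (dfm k l * Pm j l q + dfm j l * Pm k l q) = 0) ∧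
     (∀ (s : Fin n) (j k : Fin ν), ∑ i, (dmf k i * Pf i j s + dmf j i * Pf i k s) = 0) ∧
     (∀ (j k q : Fin ν), ∑ i, (dmf k i * Pm i j q + dmf j i * Pm i k q) = 0) ∧
     (∀ (i s : Fin n) (j : Fin ν),
        ∑ p, (dff i p * Pf p j s - dff p s * Pf i j p) +
          ∑ q, (dmm j q * Pf i q s - dmf q s * Pm i j q) = 0) ∧
     (∀ (i : Fin n) (j t : Fin ν),
        ∑ p, (dff i p * Pm p j t - dfm p t * Pf i j p) +
          ∑ q, (dmm j q * Pm i q t - dmm q t * Pm i j q) = 0)) :=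
  eabp_derivations_general Pf Pm D dff dfm dmf dmm hDf hDm
end

section
/- Along any trajectory z^(t) = V(z^(t−1)) of the evolution operator V with initial point z^(0) = (x^(0), y^(0)), one has for all t ≥ 1: X(x^(t)) = Y(y^(t)) = (X(x^(0))·Y(y^(0)))^{2^{t−1}}. -/
open Finset

/-- The evolution operator `V` of a bisexual population:
`x'_j = Σ_{i,k} P^f_{ik,j} x_i y_k`, `y'_l = Σ_{i,k} P^m_{ik,l} x_i y_k`. -/
noncomputable def Vmap {n ν : ℕ} (Pf : Fin n → Fin ν → Fin n → ℝ)
    (Pm : Fin n → Fin ν → Fin ν → ℝ)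
    (z : (Fin n → ℝ) × (Fin ν → ℝ)) : (Fin n → ℝ) × (Fin ν → ℝ) :=
  (fun j => ∑ i, ∑ k, Pf i k j * z.1 i * z.2 k,
   fun l => ∑ i, ∑ k, Pm i k l * z.1 i * z.2 k)

/- Since the rows of `Pf` and `Pm` sum to one, each step replaces both totals
by their product; so from `t = 1` on the totals agree and each step squares them. -/

theorem sum_sum_sum_mul_mul_of_sum_eq_one {R ι κ μ : Type*} [CommSemiring R]
    [Fintype ι] [Fintype κ] [Fintype μ] (P : ι → κ → μ → R) (hP : ∀ i k, ∑ j, P i k j = 1)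
    (x : ι → R) (y : κ → R) :
    ∑ j, ∑ i, ∑ k, P i k j * x i * y k = (∑ i, x i) * ∑ k, y k := by
  rw [sum_comm, sum_mul_sum]
  refine sum_congr rfl fun i _ => ?_
  rw [sum_comm]
  refine sum_congr rfl fun k _ => ?_
  rw [← sum_mul, ← sum_mul, hP, one_mul]

theorem pow_two_pow_of_succ_eq_mul {M : Type*} [CommMonoid M] (a b : ℕ → M)
    (ha : ∀ t, a (t + 1) = a t * b t) (hb : ∀ t, b (t + 1) = a t * b t) (t : ℕ) :
    a (t + 1) = (a 0 * b 0) ^ 2 ^ t ∧ b (t + 1) = (a 0 * b 0) ^ 2 ^ t := by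
  induction t with
  | zero => simp [ha, hb]
  | succ t ih =>
    have hab : a (t + 1) * b (t + 1) = (a 0 * b 0) ^ 2 ^ (t + 1) := by
      rw [ih.1, ih.2, ← pow_add, ← two_mul, pow_succ' 2 t]
    exact ⟨(ha _).trans hab, (hb _).trans hab⟩

theorem Vmap_sum_fst {n ν : ℕ} (Pf : Fin n → Fin ν → Fin n → ℝ)
    (Pm : Fin n → Fin ν → Fin ν → ℝ) (hPf1 : ∀ i k, ∑ j, Pf i k j = 1)
    (z : (Fin n → ℝ) × (Fin ν → ℝ)) :
    ∑ j, (Vmap Pf Pm z).1 j = (∑ i, z.1 i) * ∑ k, z.2 k :=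
  sum_sum_sum_mul_mul_of_sum_eq_one Pf hPf1 z.1 z.2

theorem Vmap_sum_snd {n ν : ℕ} (Pf : Fin n → Fin ν → Fin n → ℝ)
    (Pm : Fin n → Fin ν → Fin ν → ℝ) (hPm1 : ∀ i k, ∑ l, Pm i k l = 1)
    (z : (Fin n → ℝ) × (Fin ν → ℝ)) :
    ∑ l, (Vmap Pf Pm z).2 l = (∑ i, z.1 i) * ∑ k, z.2 k :=
  sum_sum_sum_mul_mul_of_sum_eq_one Pm hPm1 z.1 z.2

theorem eabp_trajectory_sums_general {n ν : ℕ}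
    (Pf : Fin n → Fin ν → Fin n → ℝ) (Pm : Fin n → Fin ν → Fin ν → ℝ)
    (hPf1 : ∀ i k, ∑ j, Pf i k j = 1)
    (hPm1 : ∀ i k, ∑ l, Pm i k l = 1)
    (z : ℕ → (Fin n → ℝ) × (Fin ν → ℝ))
    (hz : ∀ t, z (t + 1) = Vmap Pf Pm (z t)) :
    ∀ t : ℕ, 1 ≤ t →
      (∑ i, (z t).1 i = ((∑ i, (z 0).1 i) * (∑ k, (z 0).2 k)) ^ 2 ^ (t - 1)) ∧
      (∑ k, (z t).2 k = ((∑ i, (z 0).1 i) * (∑ k, (z 0).2 k)) ^ 2 ^ (t - 1)) := by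
  rintro (_ | t) ht
  · omega
  rw [Nat.add_sub_cancel]
  refine pow_two_pow_of_succ_eq_mul (fun t => ∑ i, (z t).1 i) (fun t => ∑ k, (z t).2 k)
    (fun t => ?_) (fun t => ?_) t
  · rw [hz, Vmap_sum_fst Pf Pm hPf1]
  · rw [hz, Vmap_sum_snd Pf Pm hPm1]

/-- Along any trajectory `z⁽ᵗ⁾ = V(z⁽ᵗ⁻¹⁾)` of the evolution operator, for all `t ≥ 1`,
`X(x⁽ᵗ⁾) = Y(y⁽ᵗ⁾) = (X(x⁽⁰⁾)·Y(y⁽⁰⁾))^(2^(t-1))`. -/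
theorem eabp_trajectory_sums {n ν : ℕ} [NeZero n] [NeZero ν]
    (Pf : Fin n → Fin ν → Fin n → ℝ) (Pm : Fin n → Fin ν → Fin ν → ℝ)
    (hPf0 : ∀ i k j, 0 ≤ Pf i k j) (hPf1 : ∀ i k, ∑ j, Pf i k j = 1)
    (hPm0 : ∀ i k l, 0 ≤ Pm i k l) (hPm1 : ∀ i k, ∑ l, Pm i k l = 1)
    (z : ℕ → (Fin n → ℝ) × (Fin ν → ℝ))
    (hz : ∀ t, z (t + 1) = Vmap Pf Pm (z t)) :
    ∀ t : ℕ, 1 ≤ t →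
      (∑ i, (z t).1 i = ((∑ i, (z 0).1 i) * (∑ k, (z 0).2 k)) ^ 2 ^ (t - 1)) ∧
      (∑ k, (z t).2 k = ((∑ i, (z 0).1 i) * (∑ k, (z 0).2 k)) ^ 2 ^ (t - 1)) :=
  eabp_trajectory_sums_general Pf Pm hPf1 hPm1 z hz
end

section
/- In the special evolution algebra ℬ₁ with A and B the identity matrices (a_{ij} = δ_{ij}, b_{kl} = δ_{kl}), an element z = (x,y) ∈ ℝ^{n+ν} is idempotent (z² = z) if and only if z belongs to the union of the following sets: {0}; {((1, x_2,…,x_n), (1, y_2,…,y_ν)) : Σ_{i=2}^n x_i = Σ_{k=2}^ν y_k = 0}; {((1, x_2,…,x_n), (1, y_2,…,y_ν)) : Σ_{i=2}^n x_i = Σ_{k=2}^ν y_k = −1}; {((1,0,…,0), (y_1,…,y_ν)) : Σ_{k=1}^ν y_k = 1, y_1 ≠ 1}; {((x_1,…,x_n), (1,0,…,0)) : Σ_{i=1}^n x_i = 1, x_1 ≠ 1}. -/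
/-!
For `A = B = I` the off-first coordinates of `z²` are `y₁ xⱼ` and `x₁ y_l`, so an idempotent has
`y₁ = 1` or `x` supported on the first coordinate, and `x₁ = 1` or `y` supported on the first
coordinate. The two first coordinates then only involve `x₁`, `y₁` and the tail sums
`Σ_{i≥2} xᵢ`, `Σ_{k≥2} y_k` (a support condition forces its tail sum to vanish), and the
remaining scalar system is solved by a case split.
-/

open Finset

/-- The squaring map (evolution operator) of the special evolution algebra `ℬ₁` of a
bisexual population determined by an `n×n` matrix `A` and a `ν×ν` matrix `B`:
`x'_1 = Σᵢ (a_{i1} y₁ + Σ_{k≥2} y_k) xᵢ`, `x'_j = y₁ Σᵢ a_{ij} xᵢ` for `j ≠ 1`,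
`y'_1 = Σₖ (b_{k1} x₁ + Σ_{i≥2} xᵢ) y_k`, `y'_l = x₁ Σₖ b_{kl} y_k` for `l ≠ 1`. -/
noncomputable def V1 {n ν : ℕ} [NeZero n] [NeZero ν]
    (A : Fin n → Fin n → ℝ) (B : Fin ν → Fin ν → ℝ)
    (z : (Fin n → ℝ) × (Fin ν → ℝ)) : (Fin n → ℝ) × (Fin ν → ℝ) :=
  (fun j => if j = 0 then
      ∑ i, (A i 0 * z.2 0 + ∑ k ∈ Finset.univ.erase 0, z.2 k) * z.1 i
    else z.2 0 * ∑ i, A i j * z.1 i,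
   fun l => if l = 0 then
      ∑ k, (B k 0 * z.1 0 + ∑ i ∈ Finset.univ.erase 0, z.1 i) * z.2 k
    else z.1 0 * ∑ k, B k l * z.2 k)

open Function

section Vectors

variable {ι M : Type*}

theorem eq_ite_zero_iff [DecidableEq ι] [Zero M] (x : ι → M) (i₀ : ι) (c : M) :
    (x = fun i => if i = i₀ then c else 0) ↔ x i₀ = c ∧ ∀ j ≠ i₀, x j = 0 := by
  constructor
  · rintro rfl
    simp +contextual
  · rintro ⟨h₀, h⟩
    funext i
    split_ifs with hi
    exacts [hi ▸ h₀, h i hi]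

theorem eq_zero_iff_apply_and [DecidableEq ι] [Zero M] (x : ι → M) (i₀ : ι) :
    x = 0 ↔ x i₀ = 0 ∧ ∀ j ≠ i₀, x j = 0 := by
  simpa using eq_update_iff (f := (0 : ι → M)) (g := x) (a := i₀) (b := 0)

theorem forall_ne_mul_eq_self_iff [MulZeroOneClass M] [IsRightCancelMulZero M]
    (x : ι → M) (i₀ : ι) (c : M) :
    (∀ j ≠ i₀, c * x j = x j) ↔ c = 1 ∨ ∀ j ≠ i₀, x j = 0 := by
  simp only [mul_left_eq_self₀]
  by_cases hc : c = 1 <;> simp [hc]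

theorem sum_erase_eq_zero_of_forall_ne [DecidableEq ι] [AddCommMonoid M] [Fintype ι]
    {x : ι → M} {i₀ : ι} (hx : ∀ j ≠ i₀, x j = 0) : ∑ i ∈ univ.erase i₀, x i = 0 :=
  sum_eq_zero fun j hj => hx j (ne_of_mem_erase hj)

end Vectors

section IdentityCase

variable {n ν : ℕ} [NeZero n] [NeZero ν]

theorem V1_one_one (x : Fin n → ℝ) (y : Fin ν → ℝ) :
    V1 (1 : Matrix (Fin n) (Fin n) ℝ) (1 : Matrix (Fin ν) (Fin ν) ℝ) (x, y) =
      (update (y 0 • x) 0 (y 0 * x 0 + (∑ k ∈ univ.erase 0, y k) * ∑ i, x i),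
       update (x 0 • y) 0 (x 0 * y 0 + (∑ i ∈ univ.erase 0, x i) * ∑ k, y k)) := by
  ext j
  all_goals
    by_cases hj : j = 0
    · subst hj
      simp only [V1, update_self, add_mul, sum_add_distrib, ← mul_sum, Matrix.one_apply, ite_mul,
        one_mul, zero_mul, sum_ite_eq', mem_univ, if_true]
    · simp [V1, hj, Matrix.one_apply]

theorem V1_one_one_eq_self_iff (x : Fin n → ℝ) (y : Fin ν → ℝ) :
    V1 (1 : Matrix (Fin n) (Fin n) ℝ) (1 : Matrix (Fin ν) (Fin ν) ℝ) (x, y) = (x, y) ↔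
      y 0 * x 0 + (∑ k ∈ univ.erase 0, y k) * ∑ i, x i = x 0 ∧ (∀ j ≠ 0, y 0 * x j = x j) ∧
      x 0 * y 0 + (∑ i ∈ univ.erase 0, x i) * ∑ k, y k = y 0 ∧ (∀ l ≠ 0, x 0 * y l = y l) := by
  simp only [V1_one_one, Prod.mk.injEq, update_eq_iff, Pi.smul_apply, smul_eq_mul, and_assoc]

end IdentityCase

/-- `p` and `q` stand for "`x`, resp. `y`, vanishes off the first coordinate", and `sx`, `sy`
for the tail sums `Σ_{i≥2} xᵢ`, `Σ_{k≥2} y_k`. -/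
theorem b1_identity_fixed_point_conditions_iff {x₀ y₀ sx sy : ℝ} {p q : Prop}
    (hp : p → sx = 0) (hq : q → sy = 0) :
    (y₀ * x₀ + sy * (x₀ + sx) = x₀ ∧ (y₀ = 1 ∨ p) ∧
      x₀ * y₀ + sx * (y₀ + sy) = y₀ ∧ (x₀ = 1 ∨ q)) ↔
      ((x₀ = 0 ∧ p) ∧ (y₀ = 0 ∧ q) ∨
       (x₀ = 1 ∧ y₀ = 1 ∧ sx = 0 ∧ sy = 0) ∨
       (x₀ = 1 ∧ y₀ = 1 ∧ sx = -1 ∧ sy = -1) ∨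
       ((x₀ = 1 ∧ p) ∧ y₀ + sy = 1 ∧ y₀ ≠ 1) ∨
       ((y₀ = 1 ∧ q) ∧ x₀ + sx = 1 ∧ x₀ ≠ 1)) := by
  constructor
  · rintro ⟨h₁, hy₀ | hp', h₂, hx₀ | hq'⟩
    · subst hx₀ hy₀
      have hsy : sy * (1 + sx) = 0 := by linarith
      have hsx : sx * (1 + sy) = 0 := by linarith
      rcases mul_eq_zero.1 hsy with hsy | hsx_neg
      · right; left
        exact ⟨rfl, rfl, by simpa [hsy] using hsx, hsy⟩
      · right; right; left
        have : sx = -1 := by linarith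
        subst this
        refine ⟨rfl, rfl, rfl, ?_⟩
        rcases mul_eq_zero.1 hsx with h | h <;> linarith
    · subst hy₀
      have hsy := hq hq'
      have hsum : x₀ + sx = 1 := by rw [hsy] at h₂; linarith
      by_cases hx₀ : x₀ = 1
      · right; left
        exact ⟨hx₀, rfl, by linarith, hsy⟩
      · right; right; right; right
        exact ⟨⟨rfl, hq'⟩, hsum, hx₀⟩
    · subst hx₀
      have hsx := hp hp'
      have hsum : y₀ + sy = 1 := by rw [hsx] at h₁; linarith
      by_cases hy₀ : y₀ = 1
      · right; left
        exact ⟨rfl, hy₀, hsx, by linarith⟩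
      · right; right; right; left
        exact ⟨⟨rfl, hp'⟩, hsum, hy₀⟩
    · rw [hp hp', hq hq'] at h₁ h₂
      have hxy : x₀ = y₀ := by linarith
      subst hxy
      rcases mul_eq_zero.1 (show x₀ * (x₀ - 1) = 0 by linarith) with hx₀ | hx₀
      · left
        exact ⟨⟨hx₀, hp'⟩, hx₀, hq'⟩
      · right; left
        exact ⟨by linarith, by linarith, hp hp', hq hq'⟩
  · rintro (⟨⟨rfl, hp'⟩, rfl, hq'⟩ | ⟨rfl, rfl, rfl, rfl⟩ | ⟨rfl, rfl, rfl, rfl⟩ |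
      ⟨⟨rfl, hp'⟩, hsum, -⟩ | ⟨⟨rfl, hq'⟩, hsum, -⟩)
    · simp [hp hp', hq hq', hp', hq']
    · norm_num
    · norm_num
    · norm_num [hp hp', hp']
      linarith
    · norm_num [hq hq', hq']
      linarith

/-- In `ℬ₁` with `A` and `B` the identity matrices, `z = (x,y)` is idempotent iff it
belongs to the union of the five sets: `{0}`;
`{((1,x₂,…,xₙ),(1,y₂,…,y_ν)) : Σ_{i≥2} xᵢ = Σ_{k≥2} y_k = 0}`;
`{((1,x₂,…,xₙ),(1,y₂,…,y_ν)) : Σ_{i≥2} xᵢ = Σ_{k≥2} y_k = -1}`;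
`{((1,0,…,0),y) : Σ_k y_k = 1, y₁ ≠ 1}`;
`{(x,(1,0,…,0)) : Σ_i xᵢ = 1, x₁ ≠ 1}`. -/
theorem b1_idempotents_identity_case {n ν : ℕ} [NeZero n] [NeZero ν]
    (A : Fin n → Fin n → ℝ) (B : Fin ν → Fin ν → ℝ)
    (hA : ∀ i j, A i j = if i = j then 1 else 0)
    (hB : ∀ k l, B k l = if k = l then 1 else 0)
    (z : (Fin n → ℝ) × (Fin ν → ℝ)) :
    V1 A B z = z ↔
      (z = 0 ∨
       (z.1 0 = 1 ∧ z.2 0 = 1 ∧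
         ∑ i ∈ Finset.univ.erase 0, z.1 i = 0 ∧ ∑ k ∈ Finset.univ.erase 0, z.2 k = 0) ∨
       (z.1 0 = 1 ∧ z.2 0 = 1 ∧
         ∑ i ∈ Finset.univ.erase 0, z.1 i = -1 ∧ ∑ k ∈ Finset.univ.erase 0, z.2 k = -1) ∨
       ((z.1 = fun i => if i = 0 then 1 else 0) ∧ ∑ k, z.2 k = 1 ∧ z.2 0 ≠ 1) ∨
       ((z.2 = fun k => if k = 0 then 1 else 0) ∧ ∑ i, z.1 i = 1 ∧ z.1 0 ≠ 1)) := by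
  obtain rfl : A = (1 : Matrix (Fin n) (Fin n) ℝ) :=
    funext₂ fun i j => (hA i j).trans Matrix.one_apply.symm
  obtain rfl : B = (1 : Matrix (Fin ν) (Fin ν) ℝ) :=
    funext₂ fun k l => (hB k l).trans Matrix.one_apply.symm
  obtain ⟨x, y⟩ := z
  rw [V1_one_one_eq_self_iff, forall_ne_mul_eq_self_iff, forall_ne_mul_eq_self_iff,
    ← add_sum_erase univ x (mem_univ 0), ← add_sum_erase univ y (mem_univ 0),
    Prod.mk_eq_zero, eq_zero_iff_apply_and x 0, eq_zero_iff_apply_and y 0, eq_ite_zero_iff x 0,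
    eq_ite_zero_iff y 0]
  exact b1_identity_fixed_point_conditions_iff (sum_erase_eq_zero_of_forall_ne (x := x))
    (sum_erase_eq_zero_of_forall_ne (x := y))
end

section
/- In the special evolution algebra ℬ₁, let z = (x,y) ∈ ℝ^{n+ν} with x_1 = 0 and y_1 = 0. Then z is an absolute nilpotent (z² = 0) if and only if (Σ_{i=2}^n x_i)·(Σ_{k=2}^ν y_k) = 0. -/
open Finset

theorem V1_eq_single_of_fst_zero_of_snd_zero {n ν : ℕ} [NeZero n] [NeZero ν]
    (A : Fin n → Fin n → ℝ) (B : Fin ν → Fin ν → ℝ) (z : (Fin n → ℝ) × (Fin ν → ℝ))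
    (hx1 : z.1 0 = 0) (hy1 : z.2 0 = 0) :
    V1 A B z =
      (Pi.single 0 ((∑ i ∈ univ.erase 0, z.1 i) * ∑ k ∈ univ.erase 0, z.2 k),
       Pi.single 0 ((∑ i ∈ univ.erase 0, z.1 i) * ∑ k ∈ univ.erase 0, z.2 k)) := by
  have hsum_x : ∑ i ∈ univ.erase 0, z.1 i = ∑ i, z.1 i := sum_erase univ hx1
  have hsum_y : ∑ k ∈ univ.erase 0, z.2 k = ∑ k, z.2 k := sum_erase univ hy1
  ext j
  · rcases eq_or_ne j 0 with rfl | hj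
    · simp [V1, hy1, ← mul_sum, hsum_x, mul_comm]
    · simp [V1, hj, hy1]
  · rcases eq_or_ne j 0 with rfl | hj
    · simp [V1, hx1, ← mul_sum, hsum_y]
    · simp [V1, hj, hx1]

theorem b1_absolute_nilpotent_case_general {n ν : ℕ} [NeZero n] [NeZero ν]
    (A : Fin n → Fin n → ℝ) (B : Fin ν → Fin ν → ℝ)
    (z : (Fin n → ℝ) × (Fin ν → ℝ))
    (hx1 : z.1 0 = 0) (hy1 : z.2 0 = 0) :
    V1 A B z = 0 ↔
      (∑ i ∈ Finset.univ.erase 0, z.1 i) * (∑ k ∈ Finset.univ.erase 0, z.2 k) = 0 := by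
  rw [V1_eq_single_of_fst_zero_of_snd_zero A B z hx1 hy1, Prod.mk_eq_zero,
    Pi.single_eq_zero_iff, Pi.single_eq_zero_iff, and_self]

/-- In `ℬ₁`, for `z = (x,y)` with `x₁ = 0` and `y₁ = 0`: `z` is an absolute nilpotent
(`z² = 0`) iff `(Σ_{i≥2} xᵢ)·(Σ_{k≥2} y_k) = 0`. -/
theorem b1_absolute_nilpotent_case {n ν : ℕ} [NeZero n] [NeZero ν]
    (A : Fin n → Fin n → ℝ) (B : Fin ν → Fin ν → ℝ)
    (hA0 : ∀ i j, 0 ≤ A i j) (hA1 : ∀ i, ∑ j, A i j = 1)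
    (hB0 : ∀ k l, 0 ≤ B k l) (hB1 : ∀ k, ∑ l, B k l = 1)
    (z : (Fin n → ℝ) × (Fin ν → ℝ))
    (hx1 : z.1 0 = 0) (hy1 : z.2 0 = 0) :
    V1 A B z = 0 ↔
      (∑ i ∈ Finset.univ.erase 0, z.1 i) * (∑ k ∈ Finset.univ.erase 0, z.2 k) = 0 :=
  b1_absolute_nilpotent_case_general A B z hx1 hy1
end
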